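/- arXiv:1605.00240 — 4 statements merged into one kernel-verified Lean document; each statement's English description precedes it below -/
import Mathlib

section
/- Let G be a finite group with symmetric generating set S = S⁻¹, let H be a finite group acting on G by automorphisms via θ : H → Aut(G) such that the induced action of H on S is simply transitive. Then the semidirect product G ⋊_θ H acts transitively on the set of directed edges of the Cayley graph Cay(G,S), and this action is simply transitive (free and transitive). -/
/-!
The element `(k, h)` of `G ⋊[θ] H` sends an edge `(a, b)` with label `a⁻¹ * b` to an edge with
label `θ h (a⁻¹ * b)`. Hence `h` is forced by simple transitivity of `H` on `S`, and then `k` is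
forced by the image of the tail `a`.
-/

theorem mul_map_inv_mul_mul_map {G F : Type*} [Group G] [FunLike F G G] [MonoidHomClass F G G]
    (φ : F) (c a b : G) : (c * φ a)⁻¹ * (c * φ b) = φ (a⁻¹ * b) := by
  simp [mul_assoc]

theorem SemidirectProduct.maps_pair_iff {N G : Type*} [Group N] [Group G] {φ : G →* MulAut N}
    (x : N ⋊[φ] G) (p q : N × N) :
    (x.left * φ x.right p.1, x.left * φ x.right p.2) = q ↔
      φ x.right (p.1⁻¹ * p.2) = q.1⁻¹ * q.2 ∧ x.left = q.1 * (φ x.right p.1)⁻¹ := by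
  constructor
  · rintro rfl
    exact ⟨(mul_map_inv_mul_mul_map _ _ _ _).symm, by simp⟩
  · rintro ⟨hlabel, hleft⟩
    have htail : x.left * φ x.right p.1 = q.1 := by rw [hleft, inv_mul_cancel_right]
    refine Prod.ext htail ?_
    calc x.left * φ x.right p.2 = x.left * φ x.right p.1 * φ x.right (p.1⁻¹ * p.2) := by
          rw [map_mul, map_inv, mul_assoc, mul_inv_cancel_left]
      _ = q.2 := by rw [htail, hlabel, mul_inv_cancel_left]

theorem stmt3_general (G H : Type*) [Group G] [Group H]
    (S : Set G)
    (θ : H →* MulAut G) (hpres : ∀ (h : H), ∀ s ∈ S, θ h s ∈ S)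
    (hsimply : ∀ s₁ ∈ S, ∀ s₂ ∈ S, ∃! h : H, θ h s₁ = s₂) :
    -- the action of G ⋊[θ] H sends directed edges to directed edges
    (∀ x : G ⋊[θ] H, ∀ p : G × G, p.1⁻¹ * p.2 ∈ S →
      (x.left * θ x.right p.1)⁻¹ * (x.left * θ x.right p.2) ∈ S) ∧
    -- and it is simply transitive on directed edges
    (∀ p q : G × G, p.1⁻¹ * p.2 ∈ S → q.1⁻¹ * q.2 ∈ S →
      ∃! x : G ⋊[θ] H, (x.left * θ x.right p.1, x.left * θ x.right p.2) = q) := by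
  refine ⟨fun x p hp => ?_, fun p q hp hq => ?_⟩
  · rw [mul_map_inv_mul_mul_map]
    exact hpres _ _ hp
  obtain ⟨h, hh, huniq⟩ := hsimply _ hp _ hq
  refine ⟨⟨q.1 * (θ h p.1)⁻¹, h⟩, (SemidirectProduct.maps_pair_iff _ p q).2 ⟨hh, rfl⟩, ?_⟩
  intro y hy
  obtain ⟨hlabel, hleft⟩ := (SemidirectProduct.maps_pair_iff y p q).1 hy
  obtain rfl : y.right = h := huniq _ hlabel
  exact SemidirectProduct.ext hleft rfl

theorem stmt3 (G H : Type*) [Group G] [Fintype G] [Group H] [Fintype H]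
    (S : Set G) (hsymm : S = S⁻¹) (hgen : Subgroup.closure S = ⊤)
    (θ : H →* MulAut G) (hpres : ∀ (h : H), ∀ s ∈ S, θ h s ∈ S)
    (hsimply : ∀ s₁ ∈ S, ∀ s₂ ∈ S, ∃! h : H, θ h s₁ = s₂) :
    -- the action of G ⋊[θ] H sends directed edges to directed edges
    (∀ x : G ⋊[θ] H, ∀ p : G × G, p.1⁻¹ * p.2 ∈ S →
      (x.left * θ x.right p.1)⁻¹ * (x.left * θ x.right p.2) ∈ S) ∧
    -- and it is simply transitive on directed edges
    (∀ p q : G × G, p.1⁻¹ * p.2 ∈ S → q.1⁻¹ * q.2 ∈ S →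
      ∃! x : G ⋊[θ] H, (x.left * θ x.right p.1, x.left * θ x.right p.2) = q) :=
  stmt3_general G H S θ hpres hsimply
end

section
/- Let G be a finite group with symmetric generating set S, K ≤ G of index 2 with K ∩ S = ∅, s₀ ∈ S, H a group, θ : H → Aut(G) with θ(H) preserving S and acting simply transitively on S, and T ⊆ H. Define the graph Γ with vertex set the undirected edges of Cay(G,S) where, for g ∈ K, e_g(h) = {g, g·θ(h)(s₀)}, and for g ∈ Ks₀, e_g(h) = {g·θ(h)(s₀⁻¹), g}, and edges of Γ are all pairs (e_g(h), e_g(ht)) for g ∈ G, h ∈ H, t ∈ T. Then the map f : K ⋊_θ H → V(Γ) given by f(k,h) = {k, k·θ(h)(s₀)} is a graph isomorphism from the Cayley graph Cay(K ⋊_θ H, Σ₁ᵀ ∪ Σ₂ᵀ) to Γ, where Σ₁ᵀ = {(1,t) : t ∈ T} and Σ₂ᵀ = {(s₀·θ(t)(s₀⁻¹), t) : t ∈ T}. -/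
/-!
Every edge of `Cay(G, S)` has exactly one end in `K`, and since `θ(H)` acts simply transitively
on `S`, it is `{k, k · θ(h)(s₀)}` for a unique `k ∈ K`, `h ∈ H`. Right multiplication by `(1, t)`
fixes the end `k` and turns `e_k(h)` into `e_k(ht)`; right multiplication by
`(s₀ · θ(t)(s₀⁻¹), t)` fixes the other end `g = k · θ(h)(s₀)` and turns `e_g(h)` into `e_g(ht)`.
-/

/-- The Cayley graph of a group `G` with connection set `S`. -/
def cayleyGraph (G : Type*) [Group G] (S : Set G) : SimpleGraph G :=
  SimpleGraph.fromRel (fun a b => a⁻¹ * b ∈ S)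

theorem SimpleGraph.fromRel_adj_iff_of_injective {V W : Type*} {r : V → V → Prop}
    {r' : W → W → Prop} {f : V → W} (hf : Function.Injective f)
    (hr : ∀ a b, r a b ↔ r' (f a) (f b)) (a b : V) :
    (fromRel r).Adj a b ↔ (fromRel r').Adj (f a) (f b) := by
  simp only [fromRel_adj, hf.ne_iff, hr]

namespace SemidirectProduct

variable {G H : Type*} [Group G] [Group H] {θ : H →* MulAut G}

theorem mul_mk_one (x : G ⋊[θ] H) (t : H) : x * ⟨1, t⟩ = ⟨x.left, x.right * t⟩ := by
  ext <;> simp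

theorem mul_mk_mul_apply_inv (x : G ⋊[θ] H) (s₀ : G) (t : H) :
    x * ⟨s₀ * θ t s₀⁻¹, t⟩ =
      ⟨x.left * θ x.right s₀ * θ (x.right * t) s₀⁻¹, x.right * t⟩ := by
  ext <;> simp [mul_assoc]

end SemidirectProduct

section LineGraph

variable {G H : Type*} [Group G] [Group H] {θ : H →* MulAut G} {K : Subgroup G} {s₀ : G}

/-- The map `f`, `(k, h) ↦ {k, k · θ(h)(s₀)}`, defined on all of `G ⋊[θ] H`. -/
def edgeOf (θ : H →* MulAut G) (s₀ : G) (x : G ⋊[θ] H) : Sym2 G :=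
  s(x.left, x.left * θ x.right s₀)

/-- The adjacency relation of `Γ`. -/
def lineRel (θ : H →* MulAut G) (K : Subgroup G) (s₀ : G) (T : Set H) (e₁ e₂ : Sym2 G) :
    Prop :=
  ∃ g : G, ∃ h : H, ∃ t ∈ T,
    (g ∈ K ∧ e₁ = s(g, g * θ h s₀) ∧ e₂ = s(g, g * θ (h * t) s₀)) ∨
    (g * s₀⁻¹ ∈ K ∧ e₁ = s(g * θ h s₀⁻¹, g) ∧ e₂ = s(g * θ (h * t) s₀⁻¹, g))

theorem edgeOf_mk_mul_apply_inv (g : G) (h : H) :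
    edgeOf θ s₀ ⟨g * θ h s₀⁻¹, h⟩ = s(g * θ h s₀⁻¹, g) := by
  simp [edgeOf]

theorem edgeOf_injOn (hθK : ∀ h, θ h s₀ ∉ K) (horb : Function.Injective fun h => θ h s₀) :
    Set.InjOn (edgeOf θ s₀) {x | x.left ∈ K} := by
  intro a ha b hb hab
  rcases Sym2.eq_iff.mp hab with ⟨hl, hr⟩ | ⟨hl, hr⟩
  · rw [hl] at hr
    exact SemidirectProduct.ext hl (horb (mul_left_cancel hr))
  · refine absurd ?_ (hθK b.right)
    have : θ b.right s₀ = b.left⁻¹ * a.left := by rw [hl, inv_mul_cancel_left]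
    exact this ▸ K.mul_mem (K.inv_mem hb) ha

/-- Both `g ∈ K s₀` and `g ∈ K θ(h)(s₀)` say `g ∉ K`. -/
theorem mul_apply_inv_mem_of_mul_inv_mem (hK : K.index = 2) (hθK : ∀ h, θ h s₀ ∉ K)
    {g : G} (hg : g * s₀⁻¹ ∈ K) (h : H) : g * θ h s₀⁻¹ ∈ K := by
  have hs₀ : s₀ ∉ K := by simpa using hθK 1
  rw [Subgroup.mul_mem_iff_of_index_two hK] at hg ⊢
  simpa [hs₀, hθK h] using hg

theorem lineRel_edgeOf_iff (hK : K.index = 2) (hθK : ∀ h, θ h s₀ ∉ K)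
    (horb : Function.Injective fun h => θ h s₀) (T : Set H) {a b : G ⋊[θ] H}
    (ha : a.left ∈ K) (hb : b.left ∈ K) :
    lineRel θ K s₀ T (edgeOf θ s₀ a) (edgeOf θ s₀ b) ↔
      ∃ t ∈ T, b = a * ⟨1, t⟩ ∨ b = a * ⟨s₀ * θ t s₀⁻¹, t⟩ := by
  have hinj := edgeOf_injOn hθK horb
  constructor
  · rintro ⟨g, h, t, ht, ⟨hg, hea, heb⟩ | ⟨hg, hea, heb⟩⟩
    · obtain rfl : a = ⟨g, h⟩ := hinj ha hg hea
      obtain rfl : b = ⟨g, h * t⟩ := hinj hb hg heb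
      exact ⟨t, ht, .inl (SemidirectProduct.mul_mk_one ⟨g, h⟩ t).symm⟩
    · rw [← edgeOf_mk_mul_apply_inv] at hea heb
      obtain rfl : a = _ := hinj ha (mul_apply_inv_mem_of_mul_inv_mem hK hθK hg h) hea
      obtain rfl : b = _ := hinj hb (mul_apply_inv_mem_of_mul_inv_mem hK hθK hg (h * t)) heb
      refine ⟨t, ht, .inr ?_⟩
      rw [SemidirectProduct.mul_mk_mul_apply_inv]
      simp
  · rintro ⟨t, ht, rfl | rfl⟩
    · refine ⟨a.left, a.right, t, ht, .inl ⟨ha, rfl, ?_⟩⟩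
      rw [SemidirectProduct.mul_mk_one]; rfl
    · refine ⟨a.left * θ a.right s₀, a.right, t, ht, .inr ⟨?_, ?_, ?_⟩⟩
      · rw [mul_assoc, Subgroup.mul_mem_cancel_left K ha,
          Subgroup.mul_mem_iff_of_index_two hK, K.inv_mem_iff]
        exact iff_of_false (hθK _) (by simpa using hθK 1)
      · simp [edgeOf]
      · rw [SemidirectProduct.mul_mk_mul_apply_inv, edgeOf_mk_mul_apply_inv]

theorem edgeOf_mem_edgeSet {S : Set G} (hS : (1 : G) ∉ S) (hmaps : ∀ h, θ h s₀ ∈ S)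
    (x : G ⋊[θ] H) : edgeOf θ s₀ x ∈ (cayleyGraph G S).edgeSet := by
  refine ⟨fun he => hS ?_, .inl ?_⟩
  · simpa [← left_eq_mul.mp he] using hmaps x.right
  · simpa using hmaps x.right

/-- Of the two ends of an edge of `Cay(G, S)`, the one in `K` is the first coordinate. -/
theorem exists_edgeOf_eq_of_inv_mul_mem (hK : K.index = 2) {S : Set G} (hSK : ∀ s ∈ S, s ∉ K)
    (hsymm : S = S⁻¹) (horb : ∀ s ∈ S, ∃ h, θ h s₀ = s) {u v : G} (huv : u⁻¹ * v ∈ S) :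
    ∃ x : G ⋊[θ] H, x.left ∈ K ∧ edgeOf θ s₀ x = s(u, v) := by
  by_cases hu : u ∈ K
  · obtain ⟨h, hh⟩ := horb _ huv
    exact ⟨⟨u, h⟩, hu, by simp [edgeOf, hh]⟩
  · have hv : v ∈ K := by
      rw [← mul_inv_cancel_left u v, Subgroup.mul_mem_iff_of_index_two hK]
      exact iff_of_false hu (hSK _ huv)
    have hvu : v⁻¹ * u ∈ S := by
      rw [hsymm]
      simpa using huv
    obtain ⟨h, hh⟩ := horb _ hvu
    exact ⟨⟨v, h⟩, hv, by simp [edgeOf, hh, Sym2.eq_swap]⟩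

theorem range_edgeOf_eq_edgeSet (hK : K.index = 2) {S : Set G} (hSK : ∀ s ∈ S, s ∉ K)
    (hsymm : S = S⁻¹) (hmaps : ∀ h, θ h s₀ ∈ S) (hsurj : ∀ s ∈ S, ∃ h, θ h s₀ = s) :
    Set.range (fun x : {x : G ⋊[θ] H // x.left ∈ K} => edgeOf θ s₀ x) =
      (cayleyGraph G S).edgeSet := by
  refine subset_antisymm ?_ fun e he => ?_
  · rintro _ ⟨x, rfl⟩
    exact edgeOf_mem_edgeSet (fun h1 => hSK 1 h1 K.one_mem) hmaps x
  induction e using Sym2.ind with | h u v => ?_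
  rcases he.2 with huv | hvu
  · obtain ⟨x, hx, hxe⟩ := exists_edgeOf_eq_of_inv_mul_mem hK hSK hsymm hsurj huv
    exact ⟨⟨x, hx⟩, hxe⟩
  · obtain ⟨x, hx, hxe⟩ := exists_edgeOf_eq_of_inv_mul_mem hK hSK hsymm hsurj hvu
    exact ⟨⟨x, hx⟩, hxe.trans Sym2.eq_swap⟩

end LineGraph

theorem stmt6_general (G H : Type*) [Group G] [Group H]
    (S : Set G) (hsymm : S = S⁻¹)
    (K : Subgroup G) (hK : K.index = 2) (hKS : (K : Set G) ∩ S = ∅)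
    (s₀ : G) (hs₀ : s₀ ∈ S)
    (θ : H →* MulAut G) (hpres : ∀ (h : H), ∀ s ∈ S, θ h s ∈ S)
    (hsimply : ∀ s₁ ∈ S, ∀ s₂ ∈ S, ∃! h : H, θ h s₁ = s₂)
    (T : Set H) :
    -- generators Sig₁ᵀ and Sig₂ᵀ, inside the ambient group G ⋊[θ] H
    let Sig₁ : Set (G ⋊[θ] H) := {x | ∃ t ∈ T, x = ⟨1, t⟩}
    let Sig₂ : Set (G ⋊[θ] H) := {x | ∃ t ∈ T, x = ⟨s₀ * θ t s₀⁻¹, t⟩}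
    -- the Cayley graph X of the subgroup K ⋊[θ] H with connection set Sig₁ ∪ Sig₂
    let X : SimpleGraph {x : G ⋊[θ] H // x.left ∈ K} :=
      SimpleGraph.fromRel (fun a b => (a : G ⋊[θ] H)⁻¹ * (b : G ⋊[θ] H) ∈ Sig₁ ∪ Sig₂)
    -- the graph Γ on the undirected edges e_g(h) of Cay(G,S)
    let Γ : SimpleGraph (Sym2 G) :=
      SimpleGraph.fromRel (fun e₁ e₂ => ∃ g : G, ∃ h : H, ∃ t ∈ T,
        (g ∈ K ∧ e₁ = s(g, g * θ h s₀) ∧ e₂ = s(g, g * θ (h * t) s₀)) ∨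
        (g * s₀⁻¹ ∈ K ∧ e₁ = s(g * θ h s₀⁻¹, g) ∧ e₂ = s(g * θ (h * t) s₀⁻¹, g)))
    let f : {x : G ⋊[θ] H // x.left ∈ K} → Sym2 G :=
      fun x => s((x : G ⋊[θ] H).left, (x : G ⋊[θ] H).left * θ (x : G ⋊[θ] H).right s₀)
    -- f is a graph isomorphism from X onto Γ, whose vertex set is the edge set of Cay(G,S)
    Function.Injective f ∧ Set.range f = (cayleyGraph G S).edgeSet ∧
      ∀ a b, X.Adj a b ↔ Γ.Adj (f a) (f b) := by
  intro Sig₁ Sig₂ X Γ f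
  have hSK : ∀ s ∈ S, s ∉ K := fun s hs hsK => hKS.subset ⟨hsK, hs⟩
  have hmaps : ∀ h, θ h s₀ ∈ S := fun h => hpres h s₀ hs₀
  have hθK : ∀ h, θ h s₀ ∉ K := fun h => hSK _ (hmaps h)
  have horb : Function.Injective fun h => θ h s₀ := fun h h' he =>
    (hsimply s₀ hs₀ _ (hmaps h')).unique he rfl
  have hf : Function.Injective f := fun a b hab =>
    Subtype.ext (edgeOf_injOn hθK horb a.2 b.2 hab)
  refine ⟨hf, range_edgeOf_eq_edgeSet hK hSK hsymm hmaps
    (fun s hs => (hsimply s₀ hs₀ s hs).exists),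
    SimpleGraph.fromRel_adj_iff_of_injective hf fun a b => ?_⟩
  refine Iff.trans ?_ (lineRel_edgeOf_iff hK hθK horb T a.2 b.2).symm
  simp only [Sig₁, Sig₂, Set.mem_union, Set.mem_ofPred_eq, inv_mul_eq_iff_eq_mul]
  simp only [← exists_or, ← and_or_left]

theorem stmt6 (G H : Type*) [Group G] [Fintype G] [Group H] [Fintype H]
    (S : Set G) (hsymm : S = S⁻¹) (hgen : Subgroup.closure S = ⊤)
    (K : Subgroup G) (hK : K.index = 2) (hKS : (K : Set G) ∩ S = ∅)
    (s₀ : G) (hs₀ : s₀ ∈ S)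
    (θ : H →* MulAut G) (hpres : ∀ (h : H), ∀ s ∈ S, θ h s ∈ S)
    (hsimply : ∀ s₁ ∈ S, ∀ s₂ ∈ S, ∃! h : H, θ h s₁ = s₂)
    (T : Set H) :
    -- generators Sig₁ᵀ and Sig₂ᵀ, inside the ambient group G ⋊[θ] H
    let Sig₁ : Set (G ⋊[θ] H) := {x | ∃ t ∈ T, x = ⟨1, t⟩}
    let Sig₂ : Set (G ⋊[θ] H) := {x | ∃ t ∈ T, x = ⟨s₀ * θ t s₀⁻¹, t⟩}
    -- the Cayley graph X of the subgroup K ⋊[θ] H with connection set Sig₁ ∪ Sig₂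
    let X : SimpleGraph {x : G ⋊[θ] H // x.left ∈ K} :=
      SimpleGraph.fromRel (fun a b => (a : G ⋊[θ] H)⁻¹ * (b : G ⋊[θ] H) ∈ Sig₁ ∪ Sig₂)
    -- the graph Γ on the undirected edges e_g(h) of Cay(G,S)
    let Γ : SimpleGraph (Sym2 G) :=
      SimpleGraph.fromRel (fun e₁ e₂ => ∃ g : G, ∃ h : H, ∃ t ∈ T,
        (g ∈ K ∧ e₁ = s(g, g * θ h s₀) ∧ e₂ = s(g, g * θ (h * t) s₀)) ∨
        (g * s₀⁻¹ ∈ K ∧ e₁ = s(g * θ h s₀⁻¹, g) ∧ e₂ = s(g * θ (h * t) s₀⁻¹, g)))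
    let f : {x : G ⋊[θ] H // x.left ∈ K} → Sym2 G :=
      fun x => s((x : G ⋊[θ] H).left, (x : G ⋊[θ] H).left * θ (x : G ⋊[θ] H).right s₀)
    -- f is a graph isomorphism from X onto Γ, whose vertex set is the edge set of Cay(G,S)
    Function.Injective f ∧ Set.range f = (cayleyGraph G S).edgeSet ∧
      ∀ a b, X.Adj a b ↔ Γ.Adj (f a) (f b) :=
  stmt6_general G H S hsymm K hK hKS s₀ hs₀ θ hpres hsimply T
end

section
/- Let g(X) ∈ F₂[X] be a polynomial dividing X^n − 1 (with n odd) and let C be the cyclic code of length n generated by g. Let C' be the cyclic code of length 2n generated by g(X)². Then the codewords of C' are exactly the interleavings of two codewords of C: identifying F₂[X]/(X^{2n}−1) with F₂^{2n}, a word (c₀, c₁, ..., c_{2n−1}) lies in C' if and only if both (c₀, c₂, ..., c_{2n−2}) and (c₁, c₃, ..., c_{2n−1}) lie in C. -/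
/-!
In characteristic 2 squaring is `expand 2`, so splitting a word of length `2n` into its even and odd
positions writes its polynomial as `a ^ 2 + X * b ^ 2`, and `X ^ (2n) - 1 = (X ^ n - 1) ^ 2`.
Since `g ^ 2 ∣ X ^ (2n) - 1`, membership in the code of `g ^ 2` is divisibility by `g ^ 2`, and
`g ^ 2 ∣ a ^ 2 + X * b ^ 2 ↔ g ∣ a ∧ g ∣ b`: the derivative of `a ^ 2 + X * b ^ 2` is `b ^ 2`.
-/

open Polynomial

section ofFn

variable {R : Type*} [DecidableEq R]

theorem sum_C_mul_X_pow_eq_ofFn [Semiring R] {n : ℕ} (v : Fin n → R) :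
    ∑ i : Fin n, C (v i) * X ^ (i : ℕ) = ofFn n v := by
  simp only [ofFn_eq_sum_monomial, C_mul_X_pow_eq_monomial]

theorem coeff_ofFn [Semiring R] {n : ℕ} (v : Fin n → R) (k : ℕ) :
    (ofFn n v).coeff k = if h : k < n then v ⟨k, h⟩ else 0 := by
  split_ifs with h
  · exact ofFn_coeff_eq_val_of_lt v h
  · exact ofFn_coeff_eq_zero_of_ge v (not_lt.mp h)

theorem ofFn_two_mul [CommSemiring R] {n : ℕ} (v : Fin (2 * n) → R) :
    ofFn (2 * n) v =
      expand R 2 (ofFn n fun i => v ⟨2 * i, Nat.mul_lt_mul_of_pos_left i.isLt two_pos⟩) +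
        X * expand R 2 (ofFn n fun i =>
          v ⟨2 * i + 1, (Nat.lt_succ_self _).trans_le (Nat.mul_le_mul_left 2 i.isLt)⟩) := by
  ext k
  rcases k with _ | k
  · simp [coeff_ofFn, coeff_expand two_pos]
  simp only [coeff_ofFn, coeff_add, coeff_expand two_pos, coeff_X_mul]
  split_ifs <;> (try simp only [add_zero, zero_add]) <;> first | omega | rfl | (congr 2; omega)

end ofFn

theorem derivative_sq_eq_zero {R : Type*} [CommSemiring R] [CharP R 2] (f : R[X]) :
    derivative (f ^ 2) = 0 := by
  rw [derivative_sq, CharTwo.two_eq_zero, C_0, zero_mul, zero_mul]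

theorem X_pow_two_mul_sub_one_eq_sq {R : Type*} [CommRing R] [CharP R 2] (n : ℕ) :
    (X ^ (2 * n) - 1 : R[X]) = (X ^ n - 1) ^ 2 := by
  rw [sub_pow_char, one_pow, ← pow_mul, mul_comm]

theorem sq_dvd_sq_add_X_mul_sq_iff {K : Type*} [Field K] [CharP K 2] (g a b : K[X]) :
    g ^ 2 ∣ a ^ 2 + X * b ^ 2 ↔ g ∣ a ∧ g ∣ b := by
  refine ⟨fun ⟨q, hq⟩ => ?_, fun ⟨ha, hb⟩ =>
    dvd_add (pow_dvd_pow_of_dvd ha 2) (dvd_mul_of_dvd_right (pow_dvd_pow_of_dvd hb 2) X)⟩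
  have hb : g ^ 2 ∣ b ^ 2 := ⟨derivative q, by
    simpa [derivative_sq_eq_zero] using congrArg derivative hq⟩
  have ha : g ^ 2 ∣ a ^ 2 := by
    have := dvd_sub ⟨q, hq⟩ (dvd_mul_of_dvd_right hb X)
    rwa [add_sub_cancel_right] at this
  rw [IsIntegrallyClosed.pow_dvd_pow_iff two_ne_zero] at ha hb
  exact ⟨ha, hb⟩

theorem exists_dvd_sub_mul_iff_dvd {R : Type*} [CommRing R] {N d : R} (hd : d ∣ N) (p : R) :
    (∃ q, N ∣ p - d * q) ↔ d ∣ p := by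
  constructor
  · rintro ⟨q, r, hr⟩
    obtain ⟨s, rfl⟩ := hd
    exact ⟨q + s * r, by linear_combination hr⟩
  · rintro ⟨q, rfl⟩
    exact ⟨q, by simp⟩

theorem stmt12 (n : ℕ)
    (g : Polynomial (ZMod 2)) (hg : g ∣ X ^ n - 1) :
    -- the polynomial associated to a coefficient vector
    let P : ∀ m : ℕ, (Fin m → ZMod 2) → Polynomial (ZMod 2) :=
      fun m c => ∑ i : Fin m, Polynomial.C (c i) * X ^ (i : ℕ)
    -- membership in the cyclic code of length n generated by g
    let memC : (Fin n → ZMod 2) → Prop :=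
      fun c => ∃ q : Polynomial (ZMod 2), (X ^ n - 1 : Polynomial (ZMod 2)) ∣ (P n c - g * q)
    -- membership in the cyclic code of length 2n generated by g²
    let memC' : (Fin (2 * n) → ZMod 2) → Prop :=
      fun c => ∃ q : Polynomial (ZMod 2),
        (X ^ (2 * n) - 1 : Polynomial (ZMod 2)) ∣ (P (2 * n) c - g ^ 2 * q)
    -- a word is in C' iff its even part and its odd part are both in C
    ∀ c : Fin (2 * n) → ZMod 2,
      memC' c ↔
        (memC (fun i : Fin n => c ⟨2 * i.val, by omega⟩) ∧
         memC (fun i : Fin n => c ⟨2 * i.val + 1, by omega⟩)) := by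
  intro P memC memC' c
  have hg2 : g ^ 2 ∣ X ^ (2 * n) - 1 := by
    rw [X_pow_two_mul_sub_one_eq_sq]
    exact pow_dvd_pow_of_dvd hg 2
  simp only [memC', memC, P, sum_C_mul_X_pow_eq_ofFn, exists_dvd_sub_mul_iff_dvd hg,
    exists_dvd_sub_mul_iff_dvd hg2, ofFn_two_mul, ZMod.expand_card]
  exact sq_dvd_sq_add_X_mul_sq_iff g _ _
end

section
/- Let Γ = Cay(G,S) be a Cayley graph where S = S⁻¹ generates G, let H be a group with θ : H → Aut(G) preserving S, fix s₀ ∈ S, and define for each vertex g the bijection h ↦ (g, g·θ(h)(s₀)) from H to the directed edges at g. Let B ⊆ F₂^H be a code invariant under left translation by H (a code defined on H). Then the resulting Cayley code C ⊆ F₂^{E} (where E is the set of directed edges, and f ∈ C iff for every g ∈ G the local word h ↦ f(g, g·θ(h)(s₀)) lies in B) is invariant under the action of G ⋊_θ H on E given by (k,h')·(g, gs) = (k·θ(h')(g), k·θ(h')(gs)). -/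
theorem MulAut.mul_apply_mul_apply {G H : Type*} [Group G] [Group H] (θ : H →* MulAut G)
    (k g s : G) (h₁ h₂ : H) :
    k * θ h₁ (g * θ h₂ s) = k * θ h₁ g * θ (h₁ * h₂) s := by
  simp only [map_mul, MulAut.mul_apply, mul_assoc]

theorem stmt14_general (G H : Type*) [Group G] [Group H]
    (θ : H →* MulAut G)
    (s₀ : G)
    -- B is a code on H invariant under left translation by H
    (B : Submodule (ZMod 2) (H → ZMod 2))
    (hB : ∀ b ∈ B, ∀ h₀ : H, (fun h => b (h₀ * h)) ∈ B)
    -- f is a codeword of the Cayley code C: every local word lies in B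
    (f : G × G → ZMod 2)
    (hf : ∀ g : G, (fun h : H => f (g, g * θ h s₀)) ∈ B) :
    -- then C is invariant under the action of G ⋊[θ] H on directed edges
    ∀ x : G ⋊[θ] H, ∀ g : G,
      (fun h : H =>
        f (x.left * θ x.right g, x.left * θ x.right (g * θ h s₀))) ∈ B := by
  intro x g
  simpa only [MulAut.mul_apply_mul_apply] using hB _ (hf (x.left * θ x.right g)) x.right

theorem stmt14 (G H : Type*) [Group G] [Fintype G] [Group H] [Fintype H]
    (S : Set G) (hsymm : S = S⁻¹) (hgen : Subgroup.closure S = ⊤)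
    (θ : H →* MulAut G) (hpres : ∀ (h : H), ∀ s ∈ S, θ h s ∈ S)
    (s₀ : G) (hs₀ : s₀ ∈ S)
    -- B is a code on H invariant under left translation by H
    (B : Submodule (ZMod 2) (H → ZMod 2))
    (hB : ∀ b ∈ B, ∀ h₀ : H, (fun h => b (h₀ * h)) ∈ B)
    -- f is a codeword of the Cayley code C: every local word lies in B
    (f : G × G → ZMod 2)
    (hf : ∀ g : G, (fun h : H => f (g, g * θ h s₀)) ∈ B) :
    -- then C is invariant under the action of G ⋊[θ] H on directed edges
    ∀ x : G ⋊[θ] H, ∀ g : G,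
      (fun h : H =>
        f (x.left * θ x.right g, x.left * θ x.right (g * θ h s₀))) ∈ B :=
  stmt14_general G H θ s₀ B hB f hf
end
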